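/- Let A = (α/n) Z B Zᵀ with Z ∈ {0,1}^{n×K} of rank K and B symmetric invertible, O = (1/n)ZᵀZ, M₀ = O^{1/2} B O^{1/2}. Let U ∈ ℝ^{n×K} have orthonormal columns spanning the image of A (eigenvectors for nonzero eigenvalues). Then there exists an orthogonal matrix V ∈ O_K(ℝ) of eigenvectors of M₀ such that U = Z X with X = n^{-1/2} O^{-1/2} V. -/

import Mathlib

open Matrix

namespace Matrix.PosSemidef

open scoped ComplexOrder

/-- The positive semidefinite square root of a positive semidefinite matrix
(the definition Mathlib had in December 2024, since removed from Mathlib). -/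
noncomputable def sqrt {n 𝕜 : Type*} [Fintype n] [DecidableEq n] [RCLike 𝕜]
    {A : Matrix n n 𝕜} (hA : A.PosSemidef) : Matrix n n 𝕜 :=
  hA.1.eigenvectorUnitary.1 * diagonal ((↑) ∘ (√·) ∘ hA.1.eigenvalues) *
  (star hA.1.eigenvectorUnitary : Matrix n n 𝕜)

end Matrix.PosSemidef

private lemma my_sqrt_mul_self {K : ℕ} {O : Matrix (Fin K) (Fin K) ℝ} (h : O.PosSemidef) :
    h.sqrt * h.sqrt = O := by
  have hU : star (h.1.eigenvectorUnitary : Matrix (Fin K) (Fin K) ℝ) *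
      (h.1.eigenvectorUnitary : Matrix (Fin K) (Fin K) ℝ) = 1 :=
    Unitary.coe_star_mul_self _
  conv_rhs => rw [h.1.spectral_theorem, Unitary.conjStarAlgAut_apply]
  unfold Matrix.PosSemidef.sqrt
  simp only [Matrix.mul_assoc]
  rw [← Matrix.mul_assoc (star _) _ (diagonal _ * _), hU, Matrix.one_mul,
    ← Matrix.mul_assoc (diagonal _) (diagonal _), diagonal_mul_diagonal]
  congr 3
  funext i
  simp [Real.mul_self_sqrt (h.eigenvalues_nonneg i)]

private lemma my_sqrt_transpose {K : ℕ} {O : Matrix (Fin K) (Fin K) ℝ} (h : O.PosSemidef) :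
    h.sqrtᵀ = h.sqrt := by
  unfold Matrix.PosSemidef.sqrt
  rw [← conjTranspose_eq_transpose_of_trivial]
  rw [conjTranspose_mul, conjTranspose_mul, star_eq_conjTranspose, conjTranspose_conjTranspose,
    diagonal_conjTranspose, star_trivial, Matrix.mul_assoc]

private lemma matrix_col_eig {K : ℕ} (M V : Matrix (Fin K) (Fin K) ℝ) (ν : Fin K → ℝ)
    (h : M * V = V * Matrix.diagonal ν) (j : Fin K) :
    M.mulVec (Vᵀ j) = ν j • (Vᵀ j) := by
  funext i
  have hk := congrFun (congrFun h i) j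
  simp only [Matrix.mul_apply, Matrix.diagonal_apply, mul_ite, mul_zero] at hk
  rw [Finset.sum_ite_eq' Finset.univ j (fun k => V i k * ν k)] at hk
  simp only [Finset.mem_univ, if_true] at hk
  simp only [Matrix.mulVec, dotProduct, Matrix.transpose_apply, Pi.smul_apply,
    smul_eq_mul]
  rw [hk]; ring

/-- Lemma 2 (decomposition): if `U` has orthonormal columns which are eigenvectors of
`A = (α/n) Z B Zᵀ` for nonzero eigenvalues (hence span the image of `A`), then there is an
orthogonal matrix `V` of eigenvectors of `M₀ = O^{1/2} B O^{1/2}` with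
`U = Z X`, `X = n^{-1/2} O^{-1/2} V`. -/
theorem leading_eigenvectors_decomposition {n K : ℕ}
    (α : ℝ) (hα : 0 < α)
    (B : Matrix (Fin K) (Fin K) ℝ) (hBsymm : B.IsSymm) (hBinv : IsUnit B.det)
    (Z : Matrix (Fin n) (Fin K) ℝ)
    (hZbin : ∀ i k, Z i k = 0 ∨ Z i k = 1)
    (hrank : Z.rank = K)
    (A O : Matrix _ _ ℝ)
    (hA : A = (α / n) • (Z * B * Zᵀ))
    (hO : O = ((n : ℝ)⁻¹) • (Zᵀ * Z))
    (hOpsd : O.PosSemidef)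
    (U : Matrix (Fin n) (Fin K) ℝ)
    (hUorth : Uᵀ * U = 1)
    (hUeig : ∀ j : Fin K, ∃ μ : ℝ, μ ≠ 0 ∧ A.mulVec (Uᵀ j) = μ • (Uᵀ j)) :
    ∃ V : Matrix (Fin K) (Fin K) ℝ,
      Vᵀ * V = 1 ∧
      (∀ j : Fin K, ∃ μ : ℝ,
        (hOpsd.sqrt * B * hOpsd.sqrt).mulVec (Vᵀ j) = μ • (Vᵀ j)) ∧
      U = Z * (((n : ℝ) ^ (-(1/2 : ℝ))) • (hOpsd.sqrt⁻¹ * V)) := by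
  rcases Nat.eq_zero_or_pos n with hn | hnpos
  · -- degenerate case: n = 0 forces K = 0, all matrices are empty
    have hK : K = 0 := by
      have h1 := Z.rank_le_card_height
      simp [hn] at h1
      omega
    have hKe : IsEmpty (Fin K) := by rw [hK]; infer_instance
    have hne : IsEmpty (Fin n) := by rw [hn]; infer_instance
    refine ⟨1, Subsingleton.elim _ _, fun j => hKe.elim j, Subsingleton.elim _ _⟩
  have hn0 : (n : ℝ) ≠ 0 := by positivity
  have hα0 : α ≠ 0 := ne_of_gt hα
  choose μ hμ0 hμeig using hUeig
  set D : Matrix (Fin K) (Fin K) ℝ := Matrix.diagonal μ with hD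
  -- A U = U D
  have hAU : A * U = U * D := by
    ext i j
    have := congrFun (hμeig j) i
    simp only [mulVec, dotProduct, Pi.smul_apply, smul_eq_mul, transpose_apply] at this
    simp [mul_apply, hD, Matrix.diagonal, this, mul_comm]
  -- Z B Zᵀ U = (n/α) • U D
  have hZBZU : Z * B * Zᵀ * U = ((n : ℝ)/α) • (U * D) := by
    have h1 : A * U = (α / n) • (Z * B * Zᵀ * U) := by
      rw [hA, Matrix.smul_mul]
    rw [h1] at hAU
    rw [← hAU, smul_smul]
    rw [div_mul_div_comm]
    rw [mul_comm (n:ℝ) α, div_self (by positivity), one_smul]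
  -- the matrix X with U = Z X
  set X : Matrix (Fin K) (Fin K) ℝ :=
    B * Zᵀ * U * Matrix.diagonal (fun j => α / (n * μ j)) with hX
  have hUX : U = Z * X := by
    have h2 : Z * X = (Z * B * Zᵀ * U) * Matrix.diagonal (fun j => α / (n * μ j)) := by
      simp [hX, Matrix.mul_assoc]
    rw [h2, hZBZU, Matrix.smul_mul, hD, Matrix.mul_assoc, Matrix.diagonal_mul_diagonal]
    have h3 : (fun j => μ j * (α / (n * μ j))) = fun _ => α / n := by
      funext j
      rw [mul_div_assoc', mul_comm (n:ℝ) (μ j), mul_div_mul_left _ _ (hμ0 j)]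
    rw [h3]
    have h4 : (Matrix.diagonal (fun _ : Fin K => α / n) : Matrix (Fin K) (Fin K) ℝ)
        = (α/(n:ℝ)) • 1 := by
      ext i j
      by_cases hij : i = j <;> simp [Matrix.diagonal_apply, Matrix.one_apply, hij]
    rw [h4, Matrix.mul_smul, Matrix.mul_one, smul_smul, div_mul_div_comm,
      mul_comm (n:ℝ) α, div_self (by positivity), one_smul]
  -- Zᵀ Z is invertible
  have hZZrank : (Zᵀ * Z).rank = K := by rw [Z.rank_transpose_mul_self, hrank]
  have hZZunit : IsUnit (Zᵀ * Z) := by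
    rw [← Matrix.mulVec_surjective_iff_isUnit]
    have htop : LinearMap.range (Zᵀ * Z).mulVecLin = ⊤ := by
      apply Submodule.eq_top_of_finrank_eq
      rw [← Matrix.rank, hZZrank]
      simp [Module.finrank_fintype_fun_eq_card]
    intro v
    have : v ∈ LinearMap.range (Zᵀ * Z).mulVecLin := htop ▸ Submodule.mem_top
    obtain ⟨w, hw⟩ := this
    exact ⟨w, hw⟩
  have hZZdet : IsUnit (Zᵀ * Z).det := (Matrix.isUnit_iff_isUnit_det _).mp hZZunit
  have hOdet : IsUnit O.det := by
    rw [hO, Matrix.det_smul]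
    exact (IsUnit.pow _ (isUnit_iff_ne_zero.mpr (inv_ne_zero hn0))).mul hZZdet
  -- sqrt properties
  set S := hOpsd.sqrt with hS
  have hSS : S * S = O := my_sqrt_mul_self hOpsd
  have hSdet : IsUnit S.det := by
    have hdd : S.det * S.det = O.det := by rw [← Matrix.det_mul, hSS]
    apply isUnit_iff_ne_zero.mpr
    intro h
    rw [h, mul_zero] at hdd
    exact (isUnit_iff_ne_zero.mp hOdet) hdd.symm
  have hSinv : S⁻¹ * S = 1 := Matrix.nonsing_inv_mul S hSdet
  have hSsymm : Sᵀ = S := by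
    exact my_sqrt_transpose hOpsd
  -- cancellation by Z (via ZᵀZ)
  have hZcancel : ∀ P Q : Matrix (Fin K) (Fin K) ℝ, Z * P = Z * Q → P = Q := by
    intro P Q h
    have h2 : (Zᵀ * Z) * P = (Zᵀ * Z) * Q := by
      rw [Matrix.mul_assoc, Matrix.mul_assoc, h]
    calc P = (Zᵀ*Z)⁻¹ * ((Zᵀ*Z) * P) := by
            rw [← Matrix.mul_assoc, Matrix.nonsing_inv_mul _ hZZdet, Matrix.one_mul]
      _ = (Zᵀ*Z)⁻¹ * ((Zᵀ*Z) * Q) := by rw [h2]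
      _ = Q := by rw [← Matrix.mul_assoc, Matrix.nonsing_inv_mul _ hZZdet, Matrix.one_mul]
  -- B O X = α⁻¹ • X D
  have hBOX : B * O * X = α⁻¹ • (X * D) := by
    apply hZcancel
    have e1 : Z * (B * O * X) = (n:ℝ)⁻¹ • (Z * B * Zᵀ * U) := by
      rw [hO, hUX]
      simp only [Matrix.mul_smul, Matrix.smul_mul, Matrix.mul_assoc]
    rw [e1, hZBZU, smul_smul]
    have e2 : (n:ℝ)⁻¹ * ((n:ℝ)/α) = α⁻¹ := by field_simp
    rw [e2, hUX]
    simp only [Matrix.mul_smul, Matrix.mul_assoc]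
  -- define V
  set V : Matrix (Fin K) (Fin K) ℝ := ((n:ℝ) ^ ((1:ℝ)/2)) • (S * X) with hV
  have hrpow : (n:ℝ) ^ ((1:ℝ)/2) * (n:ℝ) ^ ((1:ℝ)/2) = (n:ℝ) := by
    rw [← Real.rpow_add (by positivity)]
    norm_num
  refine ⟨V, ?_, ?_, ?_⟩
  · -- orthogonality
    have hVT : Vᵀ = ((n:ℝ) ^ ((1:ℝ)/2)) • (Xᵀ * S) := by
      rw [hV, Matrix.transpose_smul, Matrix.transpose_mul, hSsymm]
    have e3 : Xᵀ * S * (S * X) = Xᵀ * (O * X) := by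
      rw [Matrix.mul_assoc, ← Matrix.mul_assoc S S X, hSS]
    have e5 : (Z * X)ᵀ * U = Xᵀ * (Zᵀ * U) := by
      rw [Matrix.transpose_mul Z X, Matrix.mul_assoc]
    rw [hVT, hV, Matrix.smul_mul, Matrix.mul_smul, smul_smul, hrpow, e3, hO,
      Matrix.smul_mul, Matrix.mul_smul, smul_smul, mul_inv_cancel₀ hn0, one_smul,
      Matrix.mul_assoc Zᵀ Z X, ← hUX, ← e5, ← hUX, hUorth]
  · -- eigenvectors of M₀
    have hdiag : (Matrix.diagonal (fun j => α⁻¹ * μ j) : Matrix (Fin K) (Fin K) ℝ)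
        = α⁻¹ • D := by
      rw [hD, ← Matrix.diagonal_smul]
      rfl
    have key : (S * B * S) * V = V * Matrix.diagonal (fun j => α⁻¹ * μ j) := by
      rw [hdiag]
      have l1 : (S * B * S) * V = ((n:ℝ) ^ ((1:ℝ)/2)) • (S * (B * (O * X))) := by
        rw [hV, Matrix.mul_smul, ← hSS]
        simp only [Matrix.mul_assoc]
      have l2 : S * (B * (O * X)) = α⁻¹ • (S * (X * D)) := by
        have := hBOX
        simp only [Matrix.mul_assoc] at this
        rw [this, Matrix.mul_smul]
      rw [l1, l2, hV]
      simp only [Matrix.smul_mul, Matrix.mul_smul, smul_smul, Matrix.mul_assoc]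
      rw [mul_comm]
    exact fun j => ⟨α⁻¹ * μ j, matrix_col_eig _ _ _ key j⟩
  · -- the decomposition
    rw [hV]
    have e6 : S⁻¹ * (((n:ℝ) ^ ((1:ℝ)/2)) • (S * X)) = ((n:ℝ) ^ ((1:ℝ)/2)) • X := by
      rw [Matrix.mul_smul, ← Matrix.mul_assoc, hSinv, Matrix.one_mul]
    rw [e6, smul_smul, ← Real.rpow_add (by positivity)]
    norm_num
    exact hUX
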